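/- Let B, C, D be unital C*-algebras and let δ : B → D, γ : C → D be unital *-homomorphisms with at least one of γ, δ surjective, and let A = B ⊕_D C = {(b,c) ∈ B ⊕ C : δ(b) = γ(c)} be the pullback C*-algebra. For h ∈ GL_n(D), let M(B^n, C^n, h) = {(p,q) ∈ B^n × C^n : h·δ(p) = γ(q)} (δ, γ applied entrywise, h acting by matrix-vector multiplication), a right A-module under (p,q)·(b,c) = (p·b, q·c). If h_1, h_2 ∈ GL_n(D) lie in the same path component of GL_n(D), then M(B^n, C^n, h_1) and M(B^n, C^n, h_2) are isomorphic as right A-modules. -/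

import Mathlib

open scoped unitInterval

noncomputable section

/-- Invertible `m × m` matrices over `A`, topologized as a subspace of the matrices. -/
abbrev GLs (m : ℕ) (A : Type*) [Ring A] : Type _ :=
  {M : Matrix (Fin m) (Fin m) A // IsUnit M}

/-- The identity matrix as base point of `GL_m(A)`. -/
def GLone (m : ℕ) (A : Type*) [Ring A] : GLs m A := ⟨1, isUnit_one⟩

/-- The stabilization map `M ↦ diag(M, 1)` on matrices. -/
def stab {A : Type*} [Ring A] {n : ℕ} (M : Matrix (Fin n) (Fin n) A) :
    Matrix (Fin (n + 1)) (Fin (n + 1)) A :=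
  (Matrix.fromBlocks M 0 0 (1 : Matrix (Fin 1) (Fin 1) A)).submatrix
    finSumFinEquiv.symm finSumFinEquiv.symm

theorem stab_one {A : Type*} [Ring A] {n : ℕ} :
    stab (1 : Matrix (Fin n) (Fin n) A) = 1 := by
  rw [stab, Matrix.fromBlocks_one, Matrix.submatrix_one_equiv]

theorem stab_mul {A : Type*} [Ring A] {n : ℕ} (M N : Matrix (Fin n) (Fin n) A) :
    stab M * stab N = stab (M * N) := by
  rw [stab, stab, stab, Matrix.submatrix_mul_equiv, Matrix.fromBlocks_multiply]
  simp

theorem stab_isUnit {A : Type*} [Ring A] {n : ℕ} {M : Matrix (Fin n) (Fin n) A}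
    (h : IsUnit M) : IsUnit (stab M) := by
  obtain ⟨u, rfl⟩ := h
  refine isUnit_iff_exists.mpr ⟨stab (u⁻¹ : (Matrix (Fin n) (Fin n) A)ˣ).val, ?_, ?_⟩
  · rw [stab_mul, Units.mul_inv, stab_one]
  · rw [stab_mul, Units.inv_mul, stab_one]

theorem continuous_stab {A : Type*} [Ring A] [TopologicalSpace A] {n : ℕ} :
    Continuous fun M : Matrix (Fin n) (Fin n) A => stab M := by
  unfold stab
  exact (continuous_id.matrix_fromBlocks continuous_const continuous_const
    continuous_const).matrix_submatrix _ _

/-- The stabilization map `θ : GL_n(A) → GL_{n+1}(A)`, `M ↦ diag(M, 1)`. -/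
def stabGL {A : Type*} [Ring A] {n : ℕ} (M : GLs n A) : GLs (n + 1) A :=
  ⟨stab M.1, stab_isUnit M.2⟩

theorem stabGL_one {A : Type*} [Ring A] {n : ℕ} :
    stabGL (GLone n A) = GLone (n + 1) A :=
  Subtype.ext stab_one

theorem continuous_stabGL {A : Type*} [Ring A] [TopologicalSpace A] {n : ℕ} :
    Continuous (stabGL (A := A) (n := n)) :=
  Continuous.subtype_mk (continuous_stab.comp continuous_subtype_val) _

/-- Stabilization as a continuous map `GL_n(A) → GL_{n+1}(A)`. -/
def stabCM (n : ℕ) (A : Type*) [Ring A] [TopologicalSpace A] :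
    ContinuousMap (GLs n A) (GLs (n + 1) A) :=
  ⟨stabGL, continuous_stabGL⟩

theorem stabCM_one {A : Type*} [Ring A] [TopologicalSpace A] {n : ℕ} :
    stabCM n A (GLone n A) = GLone (n + 1) A :=
  stabGL_one

/-- The pullback `B ⊕_D C` as a star subalgebra of `B × C`. -/
def pullbackAlg {B C D : Type*} [Ring B] [Ring C] [Ring D]
    [Algebra ℂ B] [Algebra ℂ C] [Algebra ℂ D]
    [StarRing B] [StarRing C] [StarRing D]
    [StarModule ℂ B] [StarModule ℂ C] [StarModule ℂ D]
    (δ : B →⋆ₐ[ℂ] D) (γ : C →⋆ₐ[ℂ] D) : StarSubalgebra ℂ (B × C) where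
  carrier := {x | δ x.1 = γ x.2}
  mul_mem' {a b} ha hb := by
    simp only [Set.mem_setOf_eq, Prod.fst_mul, Prod.snd_mul, map_mul] at *
    rw [ha, hb]
  one_mem' := by simp
  add_mem' {a b} ha hb := by
    simp only [Set.mem_setOf_eq, Prod.fst_add, Prod.snd_add, map_add] at *
    rw [ha, hb]
  zero_mem' := by simp
  algebraMap_mem' r := by
    simp only [Set.mem_setOf_eq]
    show δ ((algebraMap ℂ (B × C)) r).1 = γ ((algebraMap ℂ (B × C)) r).2
    simp only [Prod.algebraMap_apply]
    rw [AlgHomClass.commutes, AlgHomClass.commutes]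
  star_mem' {a} ha := by
    simp only [Set.mem_setOf_eq, Prod.fst_star, Prod.snd_star, map_star] at *
    rw [ha]


variable {B C D : Type*} [CStarAlgebra B] [CStarAlgebra C] [CStarAlgebra D]
  (δ : B →⋆ₐ[ℂ] D) (γ : C →⋆ₐ[ℂ] D)

open MulOpposite in
/-- `B` as a right module over the pullback `A = B ⊕_D C`, via the first coordinate
projection `α : A → B`. -/
def rightModB : Module (↥(pullbackAlg δ γ))ᵐᵒᵖ B where
  smul c b := b * ((unop c : ↥(pullbackAlg δ γ)) : B × C).1
  one_smul b := by
    show b * ((1 : ↥(pullbackAlg δ γ)) : B × C).1 = b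
    simp
  mul_smul x y b := by
    show b * ((unop (x * y) : ↥(pullbackAlg δ γ)) : B × C).1
      = (b * ((unop y : ↥(pullbackAlg δ γ)) : B × C).1) *
          ((unop x : ↥(pullbackAlg δ γ)) : B × C).1
    simp [mul_assoc]
  smul_zero c := by
    show (0 : B) * _ = 0
    simp
  smul_add c a b := by
    show (a + b) * _ = a * _ + b * _
    rw [add_mul]
  add_smul x y b := by
    show b * ((unop (x + y) : ↥(pullbackAlg δ γ)) : B × C).1
      = b * ((unop x : ↥(pullbackAlg δ γ)) : B × C).1 +
          b * ((unop y : ↥(pullbackAlg δ γ)) : B × C).1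
    simp [mul_add]
  zero_smul b := by
    show b * ((0 : ↥(pullbackAlg δ γ)) : B × C).1 = 0
    simp

open MulOpposite in
/-- `C` as a right module over the pullback `A = B ⊕_D C`, via the second coordinate
projection `β : A → C`. -/
def rightModC : Module (↥(pullbackAlg δ γ))ᵐᵒᵖ C where
  smul c b := b * ((unop c : ↥(pullbackAlg δ γ)) : B × C).2
  one_smul b := by
    show b * ((1 : ↥(pullbackAlg δ γ)) : B × C).2 = b
    simp
  mul_smul x y b := by
    show b * ((unop (x * y) : ↥(pullbackAlg δ γ)) : B × C).2
      = (b * ((unop y : ↥(pullbackAlg δ γ)) : B × C).2) *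
          ((unop x : ↥(pullbackAlg δ γ)) : B × C).2
    simp [mul_assoc]
  smul_zero c := by
    show (0 : C) * _ = 0
    simp
  smul_add c a b := by
    show (a + b) * _ = a * _ + b * _
    rw [add_mul]
  add_smul x y b := by
    show b * ((unop (x + y) : ↥(pullbackAlg δ γ)) : B × C).2
      = b * ((unop x : ↥(pullbackAlg δ γ)) : B × C).2 +
          b * ((unop y : ↥(pullbackAlg δ γ)) : B × C).2
    simp [mul_add]
  zero_smul b := by
    show b * ((0 : ↥(pullbackAlg δ γ)) : B × C).2 = 0
    simp

attribute [local instance] rightModB rightModC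

open MulOpposite in
/-- Milnor's module `M(Bⁿ, Cⁿ, h) = {(p, q) : h·δ(p) = γ(q)}` as a right module over the
pullback `A = B ⊕_D C`. -/
def Mmod (n : ℕ) (h : Matrix (Fin n) (Fin n) D) :
    Submodule (↥(pullbackAlg δ γ))ᵐᵒᵖ ((Fin n → B) × (Fin n → C)) where
  carrier := {pq | h.mulVec (fun i => δ (pq.1 i)) = fun i => γ (pq.2 i)}
  add_mem' {a b} ha hb := by
    simp only [Set.mem_setOf_eq] at *
    funext i
    have ha' := congrFun ha i
    have hb' := congrFun hb i
    simp only [Matrix.mulVec, dotProduct, Prod.fst_add, Prod.snd_add, Pi.add_apply,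
      map_add, mul_add, Finset.sum_add_distrib] at *
    rw [ha', hb']
  zero_mem' := by
    simp only [Set.mem_setOf_eq]
    funext i
    simp [Matrix.mulVec, dotProduct]
  smul_mem' c a ha := by
    simp only [Set.mem_setOf_eq] at *
    have hc : δ ((unop c : ↥(pullbackAlg δ γ)) : B × C).1
        = γ ((unop c : ↥(pullbackAlg δ γ)) : B × C).2 := (unop c).2
    funext i
    have ha' := congrFun ha i
    show (h.mulVec fun j => δ ((a.1 j) * ((unop c : ↥(pullbackAlg δ γ)) : B × C).1)) i
      = γ ((a.2 i) * ((unop c : ↥(pullbackAlg δ γ)) : B × C).2)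
    simp only [Matrix.mulVec, dotProduct, map_mul] at ha' ⊢
    rw [← hc]
    simp only [← mul_assoc]
    rw [← Finset.sum_mul, ha']



theorem mulVec_mul_right {R : Type*} [Ring R] {n : ℕ} (u : Matrix (Fin n) (Fin n) R)
    (q : Fin n → R) (a : R) :
    u.mulVec (fun i => q i * a) = fun i => u.mulVec q i * a := by
  funext i
  simp [Matrix.mulVec, dotProduct, Finset.sum_mul, mul_assoc]

theorem matrixMap_mul {F X Y : Type*} [NonAssocSemiring X] [NonAssocSemiring Y]
    [FunLike F X Y] [RingHomClass F X Y] (f : F) {n : ℕ} (a b : Matrix (Fin n) (Fin n) X) :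
    (a * b).map f = a.map f * b.map f := by
  ext i j; simp [Matrix.map_apply, Matrix.mul_apply, map_sum]

theorem matrixMap_one {F X Y : Type*} [NonAssocSemiring X] [NonAssocSemiring Y]
    [FunLike F X Y] [RingHomClass F X Y] (f : F) {n : ℕ} :
    (1 : Matrix (Fin n) (Fin n) X).map f = 1 :=
  Matrix.map_one _ (map_zero f) (map_one f)

theorem map_mulVec {F X Y : Type*} [NonAssocSemiring X] [NonAssocSemiring Y]
    [FunLike F X Y] [RingHomClass F X Y] (f : F) {n : ℕ}
    (u : Matrix (Fin n) (Fin n) X) (q : Fin n → X) :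
    (fun i => f (u.mulVec q i)) = (u.map f).mulVec (fun i => f (q i)) := by
  funext i
  simp [Matrix.mulVec, dotProduct, map_sum, Matrix.map_apply]

set_option maxHeartbeats 2000000 in
open scoped CStarAlgebra in
theorem exists_lift_of_mem_pathComponent {X Y : Type*} [CStarAlgebra X] [CStarAlgebra Y]
    (φ : X →⋆ₐ[ℂ] Y) (hφ : Function.Surjective φ) {n : ℕ}
    (g : GLs n Y) (hg : g ∈ pathComponent (GLone n Y)) :
    ∃ u : (Matrix (Fin n) (Fin n) X)ˣ, (u.val).map φ = g.1 := by
  classical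
  letI : NormedRing (Matrix (Fin n) (Fin n) X) := Matrix.linftyOpNormedRing
  letI : NormedRing (Matrix (Fin n) (Fin n) Y) := Matrix.linftyOpNormedRing
  letI : NormedSpace ℂ (Matrix (Fin n) (Fin n) X) := Matrix.linftyOpNormedSpace
  letI : NormedSpace ℂ (Matrix (Fin n) (Fin n) Y) := Matrix.linftyOpNormedSpace
  haveI : @CompleteSpace (Matrix (Fin n) (Fin n) X)
      (PseudoMetricSpace.toUniformSpace (α := Matrix (Fin n) (Fin n) X)) :=
    (inferInstance : CompleteSpace (Fin n → Fin n → X))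
  haveI : @CompleteSpace (Matrix (Fin n) (Fin n) Y)
      (PseudoMetricSpace.toUniformSpace (α := Matrix (Fin n) (Fin n) Y)) :=
    (inferInstance : CompleteSpace (Fin n → Fin n → Y))
  let L : Matrix (Fin n) (Fin n) X →L[ℂ] Matrix (Fin n) (Fin n) Y :=
    { toFun := fun M => M.map φ
      map_add' := fun M N => by ext i j; simp [Matrix.map_apply]
      map_smul' := fun c M => by ext i j; simp [Matrix.map_apply]
      cont := by
        show Continuous fun M : Matrix (Fin n) (Fin n) X => M.map φ
        exact continuous_id.matrix_map (map_continuous φ) }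
  have hLs : Function.Surjective L := by
    intro N
    refine ⟨Matrix.of fun i j => (hφ (N i j)).choose, ?_⟩
    ext i j
    exact (hφ (N i j)).choose_spec
  set T : Set (Matrix (Fin n) (Fin n) Y) :=
    (fun M : Matrix (Fin n) (Fin n) X => M.map φ) '' {u | IsUnit u} with hTdef
  have hT : IsOpen T := L.isOpenMap hLs _ Units.isOpen
  set S : Set (GLs n Y) := Subtype.val ⁻¹' T with hSdef
  have h1T : (1 : Matrix (Fin n) (Fin n) Y) ∈ T := ⟨1, isUnit_one, matrixMap_one φ⟩
  have hSopen : IsOpen S := hT.preimage continuous_subtype_val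
  have hSclosed : IsClosed S := by
    rw [← isOpen_compl_iff, isOpen_iff_forall_mem_open]
    intro g hgS
    obtain ⟨w, hw⟩ := g.2
    refine ⟨Subtype.val ⁻¹' ((fun M => M * ((w⁻¹).val)) ⁻¹' T), ?_, ?_, ?_⟩
    · intro g' hg' hg'S
      obtain ⟨v, hv, hvmap⟩ := hg'
      obtain ⟨u, hu, humap⟩ := hg'S
      apply hgS
      refine ⟨((hv.unit⁻¹).val) * u, (hv.unit⁻¹.isUnit).mul hu, ?_⟩
      have hv2 : v.map φ = g'.1 * ((w⁻¹).val) := hvmap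
      have hu2 : u.map φ = g'.1 := humap
      have this : v.map φ * w.val = u.map φ := by
        rw [hv2, hu2, mul_assoc, Units.inv_mul, mul_one]
      calc ((hv.unit⁻¹).val * u).map φ
          = (hv.unit⁻¹).val.map φ * u.map φ := matrixMap_mul φ _ _
        _ = (hv.unit⁻¹).val.map φ * (v.map φ * w.val) := by rw [this]
        _ = ((hv.unit⁻¹).val.map φ * v.map φ) * w.val := by rw [mul_assoc]
        _ = ((hv.unit⁻¹).val * v).map φ * w.val := by rw [matrixMap_mul φ]
        _ = w.val := by
            rw [show (hv.unit⁻¹).val * v = 1 from hv.unit.inv_mul, matrixMap_one φ, one_mul]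
        _ = g.1 := hw
    · exact (hT.preimage (continuous_id.mul continuous_const)).preimage continuous_subtype_val
    · show g.1 * ((w⁻¹).val) ∈ T
      rw [← hw, Units.mul_inv]
      exact h1T
  have h1S : GLone n Y ∈ S := h1T
  have hsub : pathComponent (GLone n Y) ⊆ S :=
    isPathConnected_pathComponent.isConnected.isPreconnected.subset_isClopen
      ⟨hSclosed, hSopen⟩ ⟨GLone n Y, mem_pathComponent_self _, h1S⟩
  obtain ⟨u, hu, humap⟩ := hsub hg
  exact ⟨hu.unit, by rw [IsUnit.unit_spec]; exact humap⟩

set_option maxHeartbeats 1000000 in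
open MulOpposite in
/-- **Theorem.** If `h₁, h₂ ∈ GL_n(D)` lie in the same path component of `GL_n(D)`, then
the Milnor modules `M(Bⁿ, Cⁿ, h₁)` and `M(Bⁿ, Cⁿ, h₂)` are isomorphic as right
`A`-modules, where `A = B ⊕_D C`. -/
theorem milnor_module_iso_of_joined
    (hsurj : Function.Surjective γ ∨ Function.Surjective δ)
    (n : ℕ) (h₁ h₂ : Matrix (Fin n) (Fin n) D)
    (hu₁ : IsUnit h₁) (hu₂ : IsUnit h₂)
    (hJ : Joined (⟨h₁, hu₁⟩ : GLs n D) ⟨h₂, hu₂⟩) :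
    Nonempty (↥(Mmod δ γ n h₁) ≃ₗ[(↥(pullbackAlg δ γ))ᵐᵒᵖ] ↥(Mmod δ γ n h₂)) := by
  classical
  rcases hsurj with hγ | hδ
  · -- `γ` surjective
    have hcont : Continuous (fun x : GLs n D =>
        (⟨x.1 * (hu₁.unit⁻¹).val, x.2.mul (hu₁.unit⁻¹).isUnit⟩ : GLs n D)) :=
      Continuous.subtype_mk (continuous_subtype_val.matrix_mul continuous_const) _
    have hg : (⟨h₂ * (hu₁.unit⁻¹).val, hu₂.mul (hu₁.unit⁻¹).isUnit⟩ : GLs n D)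
        ∈ pathComponent (GLone n D) := by

      have h1 : (⟨h₁ * (hu₁.unit⁻¹).val, hu₁.mul (hu₁.unit⁻¹).isUnit⟩ : GLs n D)
          = GLone n D :=
        Subtype.ext (show h₁ * (hu₁.unit⁻¹).val = 1 from hu₁.unit.mul_inv)
      have h0' : Joined (⟨h₁ * (hu₁.unit⁻¹).val, hu₁.mul (hu₁.unit⁻¹).isUnit⟩ : GLs n D)
          ⟨h₂ * (hu₁.unit⁻¹).val, hu₂.mul (hu₁.unit⁻¹).isUnit⟩ := ⟨hJ.somePath.map hcont⟩
      exact h1 ▸ h0'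
    obtain ⟨u, humap⟩ := exists_lift_of_mem_pathComponent γ hγ _ hg
    have e1 : (u⁻¹).val.map γ * (u.val.map γ) = 1 := by
      rw [← matrixMap_mul γ, u.inv_mul, matrixMap_one γ]
    have e2 : (h₂ * (hu₁.unit⁻¹).val) * (h₁ * (hu₂.unit⁻¹).val) = 1 := by
      show (hu₂.unit.val * (hu₁.unit⁻¹).val) * (hu₁.unit.val * (hu₂.unit⁻¹).val) = 1
      rw [mul_assoc, Units.inv_mul_cancel_left, Units.mul_inv]
    have e2' : (u.val.map γ) * (h₁ * (hu₂.unit⁻¹).val) = 1 := by rw [humap]; exact e2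
    have hinvmap : (u⁻¹).val.map γ = h₁ * (hu₂.unit⁻¹).val := by
      calc (u⁻¹).val.map γ
          = (u⁻¹).val.map γ * ((u.val.map γ) * (h₁ * (hu₂.unit⁻¹).val)) := by
            rw [e2', mul_one]
        _ = ((u⁻¹).val.map γ * (u.val.map γ)) * (h₁ * (hu₂.unit⁻¹).val) := by
            rw [mul_assoc]
        _ = h₁ * (hu₂.unit⁻¹).val := by rw [e1, one_mul]
    let e : ((Fin n → B) × (Fin n → C)) ≃ₗ[(↥(pullbackAlg δ γ))ᵐᵒᵖ]
        ((Fin n → B) × (Fin n → C)) :=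
      { toFun := fun x => (x.1, u.val.mulVec x.2)
        invFun := fun x => (x.1, (u⁻¹).val.mulVec x.2)
        left_inv := fun x => by
          refine Prod.ext rfl ?_
          show (u⁻¹).val.mulVec (u.val.mulVec x.2) = x.2
          rw [Matrix.mulVec_mulVec, u.inv_mul, Matrix.one_mulVec]
        right_inv := fun x => by
          refine Prod.ext rfl ?_
          show u.val.mulVec ((u⁻¹).val.mulVec x.2) = x.2
          rw [Matrix.mulVec_mulVec, u.mul_inv, Matrix.one_mulVec]
        map_add' := fun x y => by
          refine Prod.ext rfl ?_
          show u.val.mulVec (x.2 + y.2) = u.val.mulVec x.2 + u.val.mulVec y.2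
          rw [Matrix.mulVec_add]
        map_smul' := fun c x => by
          refine Prod.ext rfl ?_
          show u.val.mulVec
              (fun i => x.2 i * ((MulOpposite.unop c : ↥(pullbackAlg δ γ)) : B × C).2)
            = fun i => u.val.mulVec x.2 i *
                ((MulOpposite.unop c : ↥(pullbackAlg δ γ)) : B × C).2
          exact mulVec_mul_right _ _ _ }
    have hmapEq : (Mmod δ γ n h₁).map e.toLinearMap = Mmod δ γ n h₂ := by
      apply le_antisymm
      · rintro x ⟨y, hy, rfl⟩
        have hy' : h₁.mulVec (fun i => δ (y.1 i)) = fun i => γ (y.2 i) := hy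
        show h₂.mulVec (fun i => δ (y.1 i)) = fun i => γ (u.val.mulVec y.2 i)
        rw [map_mulVec γ u.val y.2, humap, ← hy', Matrix.mulVec_mulVec]
        congr 1
        rw [mul_assoc, show (hu₁.unit⁻¹).val * h₁ = 1 from hu₁.unit.inv_mul, mul_one]
      · intro x hx
        have hx' : h₂.mulVec (fun i => δ (x.1 i)) = fun i => γ (x.2 i) := hx
        refine ⟨(x.1, (u⁻¹).val.mulVec x.2), ?_, ?_⟩
        · show h₁.mulVec (fun i => δ (x.1 i)) = fun i => γ ((u⁻¹).val.mulVec x.2 i)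
          rw [map_mulVec γ (u⁻¹).val x.2, hinvmap, ← hx', Matrix.mulVec_mulVec]
          congr 1
          rw [mul_assoc, show (hu₂.unit⁻¹).val * h₂ = 1 from hu₂.unit.inv_mul, mul_one]
        · refine Prod.ext rfl ?_
          show u.val.mulVec ((u⁻¹).val.mulVec x.2) = x.2
          rw [Matrix.mulVec_mulVec, u.mul_inv, Matrix.one_mulVec]
    exact ⟨LinearEquiv.ofSubmodules e _ _ hmapEq⟩
  · -- `δ` surjective
    have hcont : Continuous (fun x : GLs n D =>
        (⟨(hu₂.unit⁻¹).val * x.1, ((hu₂.unit⁻¹).isUnit).mul x.2⟩ : GLs n D)) :=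
      Continuous.subtype_mk (continuous_const.matrix_mul continuous_subtype_val) _
    have hg : (⟨(hu₂.unit⁻¹).val * h₁, ((hu₂.unit⁻¹).isUnit).mul hu₁⟩ : GLs n D)
        ∈ pathComponent (GLone n D) := by

      have h1 : (⟨(hu₂.unit⁻¹).val * h₂, ((hu₂.unit⁻¹).isUnit).mul hu₂⟩ : GLs n D)
          = GLone n D :=
        Subtype.ext (show (hu₂.unit⁻¹).val * h₂ = 1 from hu₂.unit.inv_mul)
      have h0' : Joined (⟨(hu₂.unit⁻¹).val * h₂, ((hu₂.unit⁻¹).isUnit).mul hu₂⟩ : GLs n D)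
          ⟨(hu₂.unit⁻¹).val * h₁, ((hu₂.unit⁻¹).isUnit).mul hu₁⟩ := ⟨hJ.symm.somePath.map hcont⟩
      exact h1 ▸ h0'
    obtain ⟨u, humap⟩ := exists_lift_of_mem_pathComponent δ hδ _ hg
    have e1 : (u⁻¹).val.map δ * (u.val.map δ) = 1 := by
      rw [← matrixMap_mul δ, u.inv_mul, matrixMap_one δ]
    have e2 : ((hu₂.unit⁻¹).val * h₁) * ((hu₁.unit⁻¹).val * h₂) = 1 := by
      show ((hu₂.unit⁻¹).val * hu₁.unit.val) * ((hu₁.unit⁻¹).val * hu₂.unit.val) = 1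
      rw [mul_assoc, Units.mul_inv_cancel_left, Units.inv_mul]
    have e2' : (u.val.map δ) * ((hu₁.unit⁻¹).val * h₂) = 1 := by rw [humap]; exact e2
    have hinvmap : (u⁻¹).val.map δ = (hu₁.unit⁻¹).val * h₂ := by
      calc (u⁻¹).val.map δ
          = (u⁻¹).val.map δ * ((u.val.map δ) * ((hu₁.unit⁻¹).val * h₂)) := by
            rw [e2', mul_one]
        _ = ((u⁻¹).val.map δ * (u.val.map δ)) * ((hu₁.unit⁻¹).val * h₂) := by
            rw [mul_assoc]
        _ = (hu₁.unit⁻¹).val * h₂ := by rw [e1, one_mul]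
    let e : ((Fin n → B) × (Fin n → C)) ≃ₗ[(↥(pullbackAlg δ γ))ᵐᵒᵖ]
        ((Fin n → B) × (Fin n → C)) :=
      { toFun := fun x => (u.val.mulVec x.1, x.2)
        invFun := fun x => ((u⁻¹).val.mulVec x.1, x.2)
        left_inv := fun x => by
          refine Prod.ext ?_ rfl
          show (u⁻¹).val.mulVec (u.val.mulVec x.1) = x.1
          rw [Matrix.mulVec_mulVec, u.inv_mul, Matrix.one_mulVec]
        right_inv := fun x => by
          refine Prod.ext ?_ rfl
          show u.val.mulVec ((u⁻¹).val.mulVec x.1) = x.1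
          rw [Matrix.mulVec_mulVec, u.mul_inv, Matrix.one_mulVec]
        map_add' := fun x y => by
          refine Prod.ext ?_ rfl
          show u.val.mulVec (x.1 + y.1) = u.val.mulVec x.1 + u.val.mulVec y.1
          rw [Matrix.mulVec_add]
        map_smul' := fun c x => by
          refine Prod.ext ?_ rfl
          show u.val.mulVec
              (fun i => x.1 i * ((MulOpposite.unop c : ↥(pullbackAlg δ γ)) : B × C).1)
            = fun i => u.val.mulVec x.1 i *
                ((MulOpposite.unop c : ↥(pullbackAlg δ γ)) : B × C).1
          exact mulVec_mul_right _ _ _ }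
    have hmapEq : (Mmod δ γ n h₁).map e.toLinearMap = Mmod δ γ n h₂ := by
      apply le_antisymm
      · rintro x ⟨y, hy, rfl⟩
        have hy' : h₁.mulVec (fun i => δ (y.1 i)) = fun i => γ (y.2 i) := hy
        show h₂.mulVec (fun i => δ (u.val.mulVec y.1 i)) = fun i => γ (y.2 i)
        rw [map_mulVec δ u.val y.1, humap, Matrix.mulVec_mulVec, ← mul_assoc,
          show h₂ * (hu₂.unit⁻¹).val = 1 from hu₂.unit.mul_inv, one_mul]
        exact hy'
      · intro x hx
        have hx' : h₂.mulVec (fun i => δ (x.1 i)) = fun i => γ (x.2 i) := hx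
        refine ⟨((u⁻¹).val.mulVec x.1, x.2), ?_, ?_⟩
        · show h₁.mulVec (fun i => δ ((u⁻¹).val.mulVec x.1 i)) = fun i => γ (x.2 i)
          rw [map_mulVec δ (u⁻¹).val x.1, hinvmap, Matrix.mulVec_mulVec, ← mul_assoc,
            show h₁ * (hu₁.unit⁻¹).val = 1 from hu₁.unit.mul_inv, one_mul]
          exact hx'
        · refine Prod.ext ?_ rfl
          show u.val.mulVec ((u⁻¹).val.mulVec x.1) = x.1
          rw [Matrix.mulVec_mulVec, u.mul_inv, Matrix.one_mulVec]
    exact ⟨LinearEquiv.ofSubmodules e _ _ hmapEq⟩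


end
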